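/- For every integer n ≥ 4, the image of 𝒩 under the counting operator is s(𝒩) = { x ∈ 𝒩 | ∑_{j=0}^{n-1} x_j = n }. -/

import Mathlib

/-!
Every chain `x` with `∑ x = n` arises as `s(y)`: list the values `j` with multiplicity `x j`,
i.e. read `y` off a bijection `Fin n ≃ Σ j, Fin (x j)`. The defining conditions of `𝒩` then
transfer through two observations: `s(y)_j = n` exactly when `y` is constantly `j`, and `y` is
injective exactly when `s(y) ≤ 1`. The only remaining obstruction is an injective `s(y)`, whose
values would be `0, …, n - 1` and sum to `n(n-1)/2`, which equals `n` only for `n = 3`.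
-/

open Finset Function

/-- The counting operator: `countOp n x j` is the number of indices `i` with `x i = j`. -/
def countOp (n : ℕ) (x : Fin n → ℕ) : Fin n → ℕ :=
  fun j => (Finset.univ.filter fun i => x i = (j : ℕ)).card

/-- `𝒩`: the set of `n`-chains that are neither constant nor injective. -/
def NSet (n : ℕ) : Set (Fin n → ℕ) :=
  {x | (∀ i, x i < n) ∧ (¬ ∃ c, ∀ i, x i = c) ∧ ¬ Function.Injective x}

section

variable {n : ℕ}

theorem sum_countOp {y : Fin n → ℕ} (hy : ∀ i, y i < n) : ∑ j, countOp n y j = n := by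
  have := card_eq_sum_card_fiberwise (f := fun i => (⟨y i, hy i⟩ : Fin n)) (s := univ)
    (t := univ) fun i _ => mem_univ _
  simpa [countOp, Fin.ext_iff, eq_comm] using this.symm

theorem countOp_le (y : Fin n → ℕ) (j : Fin n) : countOp n y j ≤ n :=
  (card_filter_le _ _).trans (card_fin n).le

theorem countOp_eq_iff (y : Fin n → ℕ) (j : Fin n) : countOp n y j = n ↔ ∀ i, y i = j := by
  simpa [countOp] using card_filter_eq_iff (s := (univ : Finset (Fin n))) (p := fun i => y i = j)

theorem countOp_lt_of_not_const {y : Fin n → ℕ} (hy : ¬ ∃ c, ∀ i, y i = c) (j : Fin n) :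
    countOp n y j < n :=
  (countOp_le y j).lt_of_ne fun h => hy ⟨j, (countOp_eq_iff y j).1 h⟩

theorem countOp_le_one_iff_injective {y : Fin n → ℕ} (hy : ∀ i, y i < n) :
    (∀ j, countOp n y j ≤ 1) ↔ Injective y := by
  refine ⟨fun h a b hab => ?_, fun h j => card_le_one.2 fun a ha b hb => h ?_⟩
  · exact card_le_one.1 (h ⟨y a, hy a⟩) a (by simp) b (by simp [hab])
  · simp only [mem_filter] at ha hb
    rw [ha.2, hb.2]

theorem exists_countOp_eq {x : Fin n → ℕ} (hx : ∑ j, x j = n) :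
    ∃ y : Fin n → ℕ, (∀ i, y i < n) ∧ countOp n y = x := by
  have hcard : Fintype.card (Σ j, Fin (x j)) = Fintype.card (Fin n) := by simp [hx]
  let e := (Fintype.equivOfCardEq hcard).symm
  refine ⟨fun i => (e i).1, fun i => (e i).1.isLt, funext fun j => ?_⟩
  calc countOp n (fun i => (e i).1) j = Fintype.card {i // (e i).1 = j} := by
        simp [countOp, Fintype.card_subtype, Fin.val_inj]
    _ = Fintype.card {p : Σ j, Fin (x j) // p.1 = j} :=
        Fintype.card_congr (e.subtypeEquiv fun _ => Iff.rfl)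
    _ = x j := by simp [Fintype.card_congr (Equiv.sigmaSubtype j)]

theorem sum_mul_two_of_injective {f : Fin n → ℕ} (hf : Injective f)
    (hlt : ∀ i, f i < n) : (∑ i, f i) * 2 = n * (n - 1) := by
  let g : Fin n → Fin n := fun i => ⟨f i, hlt i⟩
  have hg : Bijective g :=
    Finite.injective_iff_bijective.1 fun a b h => hf (congrArg Fin.val h)
  calc (∑ i, f i) * 2 = (∑ i : Fin n, (i : ℕ)) * 2 :=
        congrArg (· * 2) ((Equiv.ofBijective g hg).sum_comp fun i => (i : ℕ))
    _ = n * (n - 1) := by rw [Fin.sum_univ_eq_sum_range (fun i => i), sum_range_id_mul_two]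

theorem eq_one_of_sum_eq_card_of_le_one {x : Fin n → ℕ} (hsum : ∑ j, x j = n)
    (hle : ∀ j, x j ≤ 1) (j : Fin n) : x j = 1 := by
  have : ∑ j, x j = ∑ _j : Fin n, 1 := by simp [hsum]
  exact (sum_eq_sum_iff_of_le fun j _ => hle j).1 this j (mem_univ j)

theorem countOp_mem_NSet (hn : 4 ≤ n) {y : Fin n → ℕ} (hy : y ∈ NSet n) :
    countOp n y ∈ NSet n := by
  obtain ⟨hlt, hconst, hinj⟩ := hy
  have hsum := sum_countOp hlt
  refine ⟨countOp_lt_of_not_const hconst, ?_, fun h => ?_⟩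
  · rintro ⟨c, hc⟩
    have hc1 : c = 1 := by
      have : n * c = n * 1 := by simpa [hc, mul_comm] using hsum
      exact Nat.eq_of_mul_eq_mul_left (by omega) this
    exact hinj ((countOp_le_one_iff_injective hlt).1 fun j => (hc j).trans hc1 |>.le)
  · have h2 := sum_mul_two_of_injective h (countOp_lt_of_not_const hconst)
    rw [hsum] at h2
    have hn3 : 2 = n - 1 := Nat.eq_of_mul_eq_mul_left (by omega) h2
    omega

theorem mem_image_countOp {x : Fin n → ℕ} (hx : x ∈ NSet n) (hsum : ∑ j, x j = n) :
    x ∈ countOp n '' NSet n := by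
  obtain ⟨hlt, hconst, hinj⟩ := hx
  obtain ⟨y, hy, rfl⟩ := exists_countOp_eq hsum
  refine ⟨y, ⟨hy, ?_, fun h => ?_⟩, rfl⟩
  · rintro ⟨c, hc⟩
    -- `Fin n` is nonempty because `x` is not injective; this bounds `c` by `n`.
    obtain ⟨i, -⟩ := not_injective_iff.1 hinj
    let j : Fin n := ⟨c, hc i ▸ hy i⟩
    exact (hlt j).ne ((countOp_eq_iff y j).2 hc)
  · have hle := (countOp_le_one_iff_injective hy).2 h
    exact hconst ⟨1, eq_one_of_sum_eq_card_of_le_one hsum hle⟩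

end

theorem image_NSet (n : ℕ) (hn : 4 ≤ n) :
    countOp n '' NSet n = {x ∈ NSet n | ∑ j : Fin n, x j = n} := by
  ext x
  constructor
  · rintro ⟨y, hy, rfl⟩
    exact ⟨countOp_mem_NSet hn hy, sum_countOp hy.1⟩
  · rintro ⟨hx, hsum⟩
    exact mem_image_countOp hx hsum
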